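/- Nonnegativity of the most time-critical secondary CBF implies the corresponding primary CBFs are nonnegative: with d₁ := -Dist(x, P_{S(1)})/u_max ≥ 0 (assuming x ∉ interior, so Dist(x,P_{S(1)}) ≤ 0) and d_{l-1,l} := Dist(P_{S(l-1)}, P_{S(l)})/u_max ≥ 0, if b_i = r_{S(i)} - d₁ - ∑_{l=2}^{i} d_{l-1,l} ≥ 0 for some i, then r_{S(i)} ≥ dist(x, P_{S(i)})/u_max, i.e., the primary CBF h_{S(i)}(x, t) = r_{S(i)} - dist(x, P_{S(i)})/u_max is nonnegative. -/

import Mathlib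

/-- Ordered (directed) set distance: `Dist(P,Q) = sup_{p ∈ P} inf_{q ∈ Q} d(p,q)`. -/
noncomputable def orderedDist {X : Type*} [MetricSpace X] (A B : Set X) : ℝ :=
  ⨆ x : A, Metric.infDist (x : X) B

open Metric Finset

lemma infDist_le_infDist_add_orderedDist {X : Type*} [MetricSpace X]
    {A B : Set X} (hA : IsCompact A) (hAne : A.Nonempty) (x : X) :
    infDist x B ≤ infDist x A + orderedDist A B := by
  obtain ⟨a, haA, hxa⟩ := hA.exists_infDist_eq_dist hAne x
  have hbdd : BddAbove (Set.range fun p : A => infDist (p : X) B) := by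
    simpa only [Set.image_eq_range] using
      hA.bddAbove_image (continuous_infDist_pt B).continuousOn
  have haB : infDist a B ≤ orderedDist A B := le_ciSup hbdd ⟨a, haA⟩
  calc infDist x B ≤ infDist a B + dist x a := infDist_le_infDist_add_dist
    _ ≤ infDist x A + orderedDist A B := by rw [hxa]; linarith

lemma infDist_le_infDist_add_sum_orderedDist {X : Type*} [MetricSpace X] (P : ℕ → Set X)
    (x : X) (i : ℕ) (hPne : ∀ j < i, (P j).Nonempty) (hPc : ∀ j < i, IsCompact (P j)) :
    infDist x (P i) ≤ infDist x (P 0) + ∑ l ∈ Icc 1 i, orderedDist (P (l - 1)) (P l) := by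
  induction i with
  | zero => simp
  | succ n ih =>
    have hstep := infDist_le_infDist_add_orderedDist (B := P (n + 1)) (hPc n n.lt_succ_self)
      (hPne n n.lt_succ_self) x
    have hchain := ih (fun j hj => hPne j (by omega)) (fun j hj => hPc j (by omega))
    rw [sum_Icc_succ_top (by omega), Nat.add_sub_cancel]
    linarith

/-- Nonnegativity of the secondary CBF candidate `b_i` implies nonnegativity of the
corresponding primary CBF `h_{S(i)}`. The sets are indexed `0,…,k-1` for `S(1),…,S(k)`. -/
theorem secondary_cbf_implies_primary {X : Type*} [MetricSpace X]
    (k : ℕ) (P : ℕ → Set X)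
    (hPne : ∀ j < k, (P j).Nonempty) (hPc : ∀ j < k, IsCompact (P j))
    (x : X) (u_max : ℝ) (hu : 0 < u_max) (r : ℕ → ℝ) (i : ℕ) (hik : i < k)
    (hb : 0 ≤ r i - Metric.infDist x (P 0) / u_max -
        ∑ l ∈ Finset.Icc 1 i, orderedDist (P (l - 1)) (P l) / u_max) :
    Metric.infDist x (P i) / u_max ≤ r i := by
  have hchain := infDist_le_infDist_add_sum_orderedDist P x i
    (fun j hj => hPne j (hj.trans hik)) (fun j hj => hPc j (hj.trans hik))
  calc infDist x (P i) / u_max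
      ≤ (infDist x (P 0) + ∑ l ∈ Icc 1 i, orderedDist (P (l - 1)) (P l)) / u_max := by gcongr
    _ ≤ r i := by rw [add_div, sum_div]; linarith
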